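/- A 3-cycle of partial permutations is consistent in all three orientations simultaneously being characterized by a single scalar equation: with n_i = nnz(X_ki X_ij), n_j = nnz(X_kj X_ji), n_k = nnz(X_ik X_kj) and n_Δ = tr(X_ij X_jk X_ki), the three inequalities X_ij X_jk ≤ X_ik, X_jk X_ki ≤ X_ji, X_ki X_ij ≤ X_kj hold entrywise if and only if 3 n_Δ = n_i + n_j + n_k. -/
import Mathlib

/-- A partial permutation matrix: 0-1 entries, at most one 1 per row and per column. -/
def IsPartialPerm {a b : ℕ} (X : Matrix (Fin a) (Fin b) ℕ) : Prop :=
  (∀ i j, X i j = 0 ∨ X i j = 1) ∧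
  (∀ i j j', X i j = 1 → X i j' = 1 → j = j') ∧
  (∀ i i' j, X i j = 1 → X i' j = 1 → i = i')

/-- Number of nonzero entries. -/
def nnz {a b : ℕ} (X : Matrix (Fin a) (Fin b) ℕ) : ℕ :=
  (Finset.univ.filter (fun p : Fin a × Fin b => X p.1 p.2 ≠ 0)).card

section helpers

variable {p q r : ℕ} (X : Matrix (Fin p) (Fin q) ℕ) (Y : Matrix (Fin q) (Fin r) ℕ)

lemma mul_ne_zero_of_witness (u : Fin p) (v : Fin r) (m : Fin q)
    (h1 : X u m = 1) (h2 : Y m v = 1) : (X * Y) u v ≠ 0 := by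
  rw [Matrix.mul_apply]
  intro h
  have := Finset.sum_eq_zero_iff.mp h m (Finset.mem_univ m)
  rw [h1, h2] at this
  simp at this

lemma exists_witness_of_ne_zero (hX : ∀ i j, X i j = 0 ∨ X i j = 1)
    (hY : ∀ i j, Y i j = 0 ∨ Y i j = 1) (u : Fin p) (v : Fin r)
    (h : (X * Y) u v ≠ 0) : ∃ m, X u m = 1 ∧ Y m v = 1 := by
  rw [Matrix.mul_apply] at h
  obtain ⟨m, -, hm⟩ := Finset.exists_ne_zero_of_sum_ne_zero h
  refine ⟨m, ?_, ?_⟩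
  · rcases hX u m with h' | h'
    · exfalso; rw [h'] at hm; simp at hm
    · exact h'
  · rcases hY m v with h' | h'
    · exfalso; rw [h'] at hm; simp at hm
    · exact h'

lemma mul_entry_le_one (hX : ∀ i j, X i j = 0 ∨ X i j = 1)
    (hXrow : ∀ i j j', X i j = 1 → X i j' = 1 → j = j')
    (hY : ∀ i j, Y i j = 0 ∨ Y i j = 1) (u : Fin p) (v : Fin r) :
    (X * Y) u v ≤ 1 := by
  classical
  rw [Matrix.mul_apply]
  have : ∀ m : Fin q, X u m * Y m v = if X u m = 1 ∧ Y m v = 1 then 1 else 0 := by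
    intro m
    rcases hX u m with h1 | h1 <;> rcases hY m v with h2 | h2 <;> simp [h1, h2]
  rw [Finset.sum_congr rfl (fun m _ => this m), Finset.sum_boole]
  rw [Nat.cast_id, Finset.card_le_one]
  intro a ha b hb
  simp only [Finset.mem_filter] at ha hb
  exact hXrow u a b ha.2.1 hb.2.1

end helpers

theorem cycle_consistency_iff {mi mj mk : ℕ}
    (Xij : Matrix (Fin mi) (Fin mj) ℕ) (Xjk : Matrix (Fin mj) (Fin mk) ℕ)
    (Xki : Matrix (Fin mk) (Fin mi) ℕ)
    (hij : IsPartialPerm Xij) (hjk : IsPartialPerm Xjk) (hki : IsPartialPerm Xki) :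
    ((∀ a c, (Xij * Xjk) a c ≤ Xki.transpose a c) ∧
     (∀ b a, (Xjk * Xki) b a ≤ Xij.transpose b a) ∧
     (∀ c b, (Xki * Xij) c b ≤ Xjk.transpose c b)) ↔
    3 * Matrix.trace (Xij * Xjk * Xki) =
      nnz (Xki * Xij) + nnz (Xjk.transpose * Xij.transpose)
        + nnz (Xki.transpose * Xjk.transpose) := by
  classical
  obtain ⟨hij0, hijr, hijc⟩ := hij
  obtain ⟨hjk0, hjkr, hjkc⟩ := hjk
  obtain ⟨hki0, hkir, hkic⟩ := hki
  -- The set of consistent triples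
  set T : Finset (Fin mi × Fin mj × Fin mk) := Finset.univ.filter
    (fun t => Xij t.1 t.2.1 = 1 ∧ Xjk t.2.1 t.2.2 = 1 ∧ Xki t.2.2 t.1 = 1) with hT
  have hmemT : ∀ t : Fin mi × Fin mj × Fin mk, t ∈ T ↔
      Xij t.1 t.2.1 = 1 ∧ Xjk t.2.1 t.2.2 = 1 ∧ Xki t.2.2 t.1 = 1 := by
    intro t; rw [hT]; simp
  -- the three pair sets
  set Si : Finset (Fin mk × Fin mj) := Finset.univ.filter
    (fun p => (Xki * Xij) p.1 p.2 ≠ 0) with hSi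
  set Sj : Finset (Fin mk × Fin mi) := Finset.univ.filter
    (fun p => (Xjk.transpose * Xij.transpose) p.1 p.2 ≠ 0) with hSj
  set Sk : Finset (Fin mi × Fin mj) := Finset.univ.filter
    (fun p => (Xki.transpose * Xjk.transpose) p.1 p.2 ≠ 0) with hSk
  have hnnzi : nnz (Xki * Xij) = Si.card := rfl
  have hnnzj : nnz (Xjk.transpose * Xij.transpose) = Sj.card := rfl
  have hnnzk : nnz (Xki.transpose * Xjk.transpose) = Sk.card := rfl
  -- trace counts triples
  have htr : Matrix.trace (Xij * Xjk * Xki) = T.card := by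
    have hterm : ∀ (a : Fin mi) (b : Fin mj) (c : Fin mk),
        Xij a b * Xjk b c * Xki c a =
          if Xij a b = 1 ∧ Xjk b c = 1 ∧ Xki c a = 1 then 1 else 0 := by
      intro a b c
      rcases hij0 a b with h1 | h1 <;> rcases hjk0 b c with h2 | h2 <;>
        rcases hki0 c a with h3 | h3 <;> simp [h1, h2, h3]
    rw [hT, Finset.card_filter]
    rw [Fintype.sum_prod_type]
    simp only [Fintype.sum_prod_type]
    rw [Matrix.trace]
    simp only [Matrix.diag, Matrix.mul_apply, Finset.sum_mul]
    refine Finset.sum_congr rfl fun a _ => ?_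
    rw [Finset.sum_comm]
    refine Finset.sum_congr rfl fun b _ => Finset.sum_congr rfl fun c _ => hterm a b c
  -- projections
  set fi : Fin mi × Fin mj × Fin mk → Fin mk × Fin mj := fun t => (t.2.2, t.2.1) with hfi
  set fj : Fin mi × Fin mj × Fin mk → Fin mk × Fin mi := fun t => (t.2.2, t.1) with hfj
  set fk : Fin mi × Fin mj × Fin mk → Fin mi × Fin mj := fun t => (t.1, t.2.1) with hfk
  -- images are contained in the pair sets
  have hsubi : Finset.image fi T ⊆ Si := by
    intro p hp
    obtain ⟨t, ht, rfl⟩ := Finset.mem_image.mp hp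
    rw [hmemT] at ht
    rw [hSi, Finset.mem_filter]
    exact ⟨Finset.mem_univ _, mul_ne_zero_of_witness Xki Xij _ _ t.1 ht.2.2 ht.1⟩
  have hsubj : Finset.image fj T ⊆ Sj := by
    intro p hp
    obtain ⟨t, ht, rfl⟩ := Finset.mem_image.mp hp
    rw [hmemT] at ht
    rw [hSj, Finset.mem_filter]
    refine ⟨Finset.mem_univ _, mul_ne_zero_of_witness _ _ _ _ t.2.1 ?_ ?_⟩
    · simpa [Matrix.transpose_apply] using ht.2.1
    · simpa [Matrix.transpose_apply] using ht.1
  have hsubk : Finset.image fk T ⊆ Sk := by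
    intro p hp
    obtain ⟨t, ht, rfl⟩ := Finset.mem_image.mp hp
    rw [hmemT] at ht
    rw [hSk, Finset.mem_filter]
    refine ⟨Finset.mem_univ _, mul_ne_zero_of_witness _ _ _ _ t.2.2 ?_ ?_⟩
    · simpa [Matrix.transpose_apply] using ht.2.2
    · simpa [Matrix.transpose_apply] using ht.2.1
  -- the projections are injective on T
  have hinji : Set.InjOn fi T := by
    intro t1 h1 t2 h2 heq
    rw [Finset.mem_coe, hmemT] at h1 h2
    simp only [hfi, Prod.mk.injEq] at heq
    obtain ⟨hc, hb⟩ := heq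
    have ha : t1.1 = t2.1 := by
      have h1' := h1.2.2
      rw [hc] at h1'
      exact hkir t2.2.2 t1.1 t2.1 h1' h2.2.2
    exact Prod.ext ha (Prod.ext hb hc)
  have hinjj : Set.InjOn fj T := by
    intro t1 h1 t2 h2 heq
    rw [Finset.mem_coe, hmemT] at h1 h2
    simp only [hfj, Prod.mk.injEq] at heq
    obtain ⟨hc, ha⟩ := heq
    have hb : t1.2.1 = t2.2.1 := by
      have h1' := h1.2.1
      rw [hc] at h1'
      exact hjkc t1.2.1 t2.2.1 t2.2.2 h1' h2.2.1
    exact Prod.ext ha (Prod.ext hb hc)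
  have hinjk : Set.InjOn fk T := by
    intro t1 h1 t2 h2 heq
    rw [Finset.mem_coe, hmemT] at h1 h2
    simp only [hfk, Prod.mk.injEq] at heq
    obtain ⟨ha, hb⟩ := heq
    have hc : t1.2.2 = t2.2.2 := by
      have h1' := h1.2.1
      rw [hb] at h1'
      exact hjkr t2.2.1 t1.2.2 t2.2.2 h1' h2.2.1
    exact Prod.ext ha (Prod.ext hb hc)
  have hcardi : (Finset.image fi T).card = T.card := Finset.card_image_of_injOn hinji
  have hcardj : (Finset.image fj T).card = T.card := Finset.card_image_of_injOn hinjj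
  have hcardk : (Finset.image fk T).card = T.card := Finset.card_image_of_injOn hinjk
  have hlei : T.card ≤ Si.card := hcardi ▸ Finset.card_le_card hsubi
  have hlej : T.card ≤ Sj.card := hcardj ▸ Finset.card_le_card hsubj
  have hlek : T.card ≤ Sk.card := hcardk ▸ Finset.card_le_card hsubk
  rw [htr, hnnzi, hnnzj, hnnzk]
  constructor
  · rintro ⟨h1, h2, h3⟩
    -- each pair set is contained in the corresponding image
    have hieq : Si ⊆ Finset.image fi T := by
      intro p hp
      rw [hSi, Finset.mem_filter] at hp
      obtain ⟨a, ha1, ha2⟩ := exists_witness_of_ne_zero Xki Xij hki0 hij0 p.1 p.2 hp.2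
      have hx := h3 p.1 p.2
      rw [Matrix.transpose_apply] at hx
      have hge : 1 ≤ (Xki * Xij) p.1 p.2 := Nat.one_le_iff_ne_zero.mpr hp.2
      have hjk1 : Xjk p.2 p.1 = 1 := by rcases hjk0 p.2 p.1 with h | h <;> omega
      refine Finset.mem_image.mpr ⟨(a, p.2, p.1), ?_, ?_⟩
      · rw [hmemT]; exact ⟨ha2, hjk1, ha1⟩
      · rw [hfi]
    have hjeq : Sj ⊆ Finset.image fj T := by
      intro p hp
      rw [hSj, Finset.mem_filter] at hp
      obtain ⟨b, hb1, hb2⟩ := exists_witness_of_ne_zero Xjk.transpose Xij.transpose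
        (fun i j => hjk0 j i) (fun i j => hij0 j i) p.1 p.2 hp.2
      rw [Matrix.transpose_apply] at hb1 hb2
      have hx := h1 p.2 p.1
      rw [Matrix.transpose_apply] at hx
      have hge : 1 ≤ (Xij * Xjk) p.2 p.1 := by
        have := mul_ne_zero_of_witness Xij Xjk p.2 p.1 b hb2 hb1
        omega
      have hki1 : Xki p.1 p.2 = 1 := by rcases hki0 p.1 p.2 with h | h <;> omega
      refine Finset.mem_image.mpr ⟨(p.2, b, p.1), ?_, ?_⟩
      · rw [hmemT]; exact ⟨hb2, hb1, hki1⟩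
      · rw [hfj]
    have hkeq : Sk ⊆ Finset.image fk T := by
      intro p hp
      rw [hSk, Finset.mem_filter] at hp
      obtain ⟨c, hc1, hc2⟩ := exists_witness_of_ne_zero Xki.transpose Xjk.transpose
        (fun i j => hki0 j i) (fun i j => hjk0 j i) p.1 p.2 hp.2
      rw [Matrix.transpose_apply] at hc1 hc2
      have hx := h2 p.2 p.1
      rw [Matrix.transpose_apply] at hx
      have hge : 1 ≤ (Xjk * Xki) p.2 p.1 := by
        have := mul_ne_zero_of_witness Xjk Xki p.2 p.1 c hc2 hc1
        omega
      have hij1 : Xij p.1 p.2 = 1 := by rcases hij0 p.1 p.2 with h | h <;> omega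
      refine Finset.mem_image.mpr ⟨(p.1, p.2, c), ?_, ?_⟩
      · rw [hmemT]; exact ⟨hij1, hc2, hc1⟩
      · rw [hfk]
    have e1 : Si.card = T.card := le_antisymm (hcardi ▸ Finset.card_le_card hieq) hlei
    have e2 : Sj.card = T.card := le_antisymm (hcardj ▸ Finset.card_le_card hjeq) hlej
    have e3 : Sk.card = T.card := le_antisymm (hcardk ▸ Finset.card_le_card hkeq) hlek
    omega
  · intro h
    have h' : 3 * T.card = Si.card + Sj.card + Sk.card := by exact_mod_cast h
    have ei : Si.card = T.card := by omega
    have ej : Sj.card = T.card := by omega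
    have ek : Sk.card = T.card := by omega
    have hIi : Finset.image fi T = Si :=
      Finset.eq_of_subset_of_card_le hsubi (by omega)
    have hIj : Finset.image fj T = Sj :=
      Finset.eq_of_subset_of_card_le hsubj (by omega)
    have hIk : Finset.image fk T = Sk :=
      Finset.eq_of_subset_of_card_le hsubk (by omega)
    refine ⟨fun a c => ?_, fun b a => ?_, fun c b => ?_⟩
    · by_cases h0 : (Xij * Xjk) a c = 0
      · rw [h0]; exact Nat.zero_le _
      · obtain ⟨b, hb1, hb2⟩ := exists_witness_of_ne_zero Xij Xjk hij0 hjk0 a c h0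
        have hmem : (c, a) ∈ Sj := by
          rw [hSj, Finset.mem_filter]
          refine ⟨Finset.mem_univ _, mul_ne_zero_of_witness _ _ _ _ b ?_ ?_⟩
          · simpa [Matrix.transpose_apply] using hb2
          · simpa [Matrix.transpose_apply] using hb1
        rw [← hIj] at hmem
        obtain ⟨t, ht, hft⟩ := Finset.mem_image.mp hmem
        rw [hmemT] at ht
        simp only [hfj, Prod.mk.injEq] at hft
        obtain ⟨hc, ha⟩ := hft
        have hki1 : Xki c a = 1 := by rw [← hc, ← ha]; exact ht.2.2
        have hle := mul_entry_le_one Xij Xjk hij0 hijr hjk0 a c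
        rw [Matrix.transpose_apply, hki1]
        exact hle
    · by_cases h0 : (Xjk * Xki) b a = 0
      · rw [h0]; exact Nat.zero_le _
      · obtain ⟨c, hc1, hc2⟩ := exists_witness_of_ne_zero Xjk Xki hjk0 hki0 b a h0
        have hmem : (a, b) ∈ Sk := by
          rw [hSk, Finset.mem_filter]
          refine ⟨Finset.mem_univ _, mul_ne_zero_of_witness _ _ _ _ c ?_ ?_⟩
          · simpa [Matrix.transpose_apply] using hc2
          · simpa [Matrix.transpose_apply] using hc1
        rw [← hIk] at hmem
        obtain ⟨t, ht, hft⟩ := Finset.mem_image.mp hmem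
        rw [hmemT] at ht
        simp only [hfk, Prod.mk.injEq] at hft
        obtain ⟨ha, hb⟩ := hft
        have hij1 : Xij a b = 1 := by rw [← ha, ← hb]; exact ht.1
        have hle := mul_entry_le_one Xjk Xki hjk0 hjkr hki0 b a
        rw [Matrix.transpose_apply, hij1]
        exact hle
    · by_cases h0 : (Xki * Xij) c b = 0
      · rw [h0]; exact Nat.zero_le _
      · obtain ⟨a, ha1, ha2⟩ := exists_witness_of_ne_zero Xki Xij hki0 hij0 c b h0
        have hmem : (c, b) ∈ Si := by
          rw [hSi, Finset.mem_filter]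
          exact ⟨Finset.mem_univ _, h0⟩
        rw [← hIi] at hmem
        obtain ⟨t, ht, hft⟩ := Finset.mem_image.mp hmem
        rw [hmemT] at ht
        simp only [hfi, Prod.mk.injEq] at hft
        obtain ⟨hc, hb⟩ := hft
        have hjk1 : Xjk b c = 1 := by rw [← hb, ← hc]; exact ht.2.1
        have hle := mul_entry_le_one Xki Xij hki0 hkir hij0 c b
        rw [Matrix.transpose_apply, hjk1]
        exact hle
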